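/- Suppose ρ₁ ≠ ρ₂, ρ₁⁻¹ = t₁ and ρ₂⁻¹ = t₂ are integers divisible by p, and c'' = c₁/c₂ with gcd(c₁, c₂) = 1 and c₂ = p^u·c₂' where u ∈ ℕ and p ∤ c₂'. Then the integral periodic zero set of μ_{M̃,D̃} is empty: for every ξ ∈ G there exists k ∈ ℤ² such that μ̂_{M̃,D̃}(ξ + P'k) ≠ 0, where G = [0, a₁·c₂'] × [−|c₁a₁ − c₂a₂|/p^{u+1}, |c₁a₁ − c₂a₂|/p^{u+1}]. -/

import Mathlib

open MeasureTheory Complex Matrix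
open scoped ENNReal

noncomputable section

/-- The exponential function `e_λ(x) = e^{-2πi⟨λ,x⟩}` on `ℝ²`. -/
def expChar (lam x : Fin 2 → ℝ) : ℂ :=
  Complex.exp ((-2 * Real.pi * Complex.I) * ((lam 0 * x 0 + lam 1 * x 1 : ℝ) : ℂ))

/-- The Fourier transform `μ̂(ξ) = ∫ e^{-2πi⟨ξ,x⟩} dμ(x)` of a measure on `ℝ²`. -/
def ftMeasure (μ : Measure (Fin 2 → ℝ)) (ξ : Fin 2 → ℝ) : ℂ :=
  ∫ x, expChar ξ x ∂μ

/-- The mask `m_D(ξ) = (1/p) Σ_{d∈D} e^{-2πi⟨ξ,d⟩}` of a digit system `D : Fin p → ℝ²`. -/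
def mask {p : ℕ} (D : Fin p → (Fin 2 → ℝ)) (ξ : Fin 2 → ℝ) : ℂ :=
  (p : ℂ)⁻¹ * ∑ i : Fin p, expChar ξ (D i)

/-- Integer digits, coerced to real vectors. -/
def digitR {p : ℕ} (D : Fin p → (Fin 2 → ℤ)) : Fin p → (Fin 2 → ℝ) :=
  fun i j => (D i j : ℝ)

/-- `μ` is the self-affine measure of the IFS `φ_d(x) = M⁻¹(x+d)`, `d ∈ D`:
a compactly supported Borel probability measure with `μ = (1/#D) Σ_d μ ∘ φ_d⁻¹`. -/
def IsSelfAffine {p : ℕ} (μ : Measure (Fin 2 → ℝ)) (M : Matrix (Fin 2) (Fin 2) ℝ)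
    (D : Fin p → (Fin 2 → ℝ)) : Prop :=
  IsProbabilityMeasure μ ∧ (∃ K : Set (Fin 2 → ℝ), IsCompact K ∧ μ Kᶜ = 0) ∧
  μ = (p : ℝ≥0∞)⁻¹ • ∑ i : Fin p, μ.map (fun x => M⁻¹.mulVec (x + D i))

/-- `Λ` is an orthogonal set of exponentials for `μ`. -/
def IsOrthoSet (μ : Measure (Fin 2 → ℝ)) (Λ : Set (Fin 2 → ℝ)) : Prop :=
  ∀ l ∈ Λ, ∀ l' ∈ Λ, l ≠ l' → ftMeasure μ (l - l') = 0

/-- `μ` is a spectral measure: some countable set of exponentials forms an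
orthonormal (Hilbert) basis of `L²(μ)`. -/
def IsSpectral (μ : Measure (Fin 2 → ℝ)) : Prop :=
  ∃ Λ : Set (Fin 2 → ℝ), Λ.Countable ∧
    ∃ b : HilbertBasis Λ ℂ (Lp ℂ 2 μ),
      ∀ lam : Λ, ⇑(b lam) =ᵐ[μ] expChar (lam : Fin 2 → ℝ)

/-- The standing assumption on the digit set: `a = (a₁,a₂)` has entries in `[1,p-1]`
and `Z(m_D) = ⋃_{j=1}^{p-1} (j·a/p + ℤ²)`. -/
def ZeroSetCond (p : ℕ) (D : Fin p → (Fin 2 → ℤ)) (a : Fin 2 → ℤ) : Prop :=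
  (∀ i, 1 ≤ a i ∧ a i ≤ (p : ℤ) - 1) ∧
  ∀ ξ : Fin 2 → ℝ, mask (digitR D) ξ = 0 ↔
    ∃ j : ℕ, 1 ≤ j ∧ j ≤ p - 1 ∧ ∃ k : Fin 2 → ℤ,
      ∀ i, ξ i = (j : ℝ) * (a i : ℝ) / p + (k i : ℝ)

/-- The upper-triangular expanding matrix `M = [[ρ₁⁻¹, c],[0, ρ₂⁻¹]]`. -/
def Mupper (ρ₁ ρ₂ c : ℝ) : Matrix (Fin 2) (Fin 2) ℝ := !![ρ₁⁻¹, c; 0, ρ₂⁻¹]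

/-- The set `E_a = {h/l : gcd(h,l)=1, l·a₂ − h·a₁ ∈ ℤ∖pℤ} ∪ {0}`. -/
def Ea (p : ℕ) (a : Fin 2 → ℤ) : Set ℝ :=
  {x | ∃ h l : ℤ, Int.gcd h l = 1 ∧ ¬ ((p : ℤ) ∣ (l * a 1 - h * a 0)) ∧
    x = (h : ℝ) / (l : ℝ)} ∪ {0}



lemma expChar_eq (lam x : Fin 2 → ℝ) :
    expChar lam x = Complex.exp (((-(2 * Real.pi * (lam 0 * x 0 + lam 1 * x 1)) : ℝ) : ℂ) * Complex.I) := by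
  unfold expChar; congr 1; push_cast; ring

lemma norm_expChar (lam x : Fin 2 → ℝ) : ‖expChar lam x‖ = 1 := by
  rw [expChar_eq]
  exact Complex.norm_exp_ofReal_mul_I _

lemma continuous_expChar (lam : Fin 2 → ℝ) : Continuous (expChar lam) := by
  unfold expChar
  exact Complex.continuous_exp.comp (continuous_const.mul (Complex.continuous_ofReal.comp
    (((continuous_const.mul (continuous_apply 0)).add (continuous_const.mul (continuous_apply 1))))))

lemma continuous_expChar' (x : Fin 2 → ℝ) : Continuous (fun lam => expChar lam x) := by
  unfold expChar
  exact Complex.continuous_exp.comp (continuous_const.mul (Complex.continuous_ofReal.comp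
    ((((continuous_apply 0).mul continuous_const).add ((continuous_apply 1).mul continuous_const)))))

lemma integrable_expChar (μ : Measure (Fin 2 → ℝ)) [IsFiniteMeasure μ] (lam : Fin 2 → ℝ) :
    Integrable (expChar lam) μ :=
  ⟨(continuous_expChar lam).aestronglyMeasurable,
    HasFiniteIntegral.of_bounded (C := 1)
      (Filter.Eventually.of_forall fun x => le_of_eq (norm_expChar lam x))⟩

lemma ftMeasure_zero (μ : Measure (Fin 2 → ℝ)) [IsProbabilityMeasure μ] : ftMeasure μ 0 = 1 := by
  have h : ∀ x, expChar 0 x = 1 := by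
    intro x; unfold expChar; norm_num
  unfold ftMeasure
  simp [h]

lemma continuousAt_ftMeasure (μ : Measure (Fin 2 → ℝ)) [IsProbabilityMeasure μ] :
    ContinuousAt (ftMeasure μ) 0 := by
  apply MeasureTheory.continuousAt_of_dominated (bound := fun _ => (1 : ℝ))
  · exact Filter.Eventually.of_forall fun lam => (continuous_expChar lam).aestronglyMeasurable
  · exact Filter.Eventually.of_forall fun lam => Filter.Eventually.of_forall fun x =>
      le_of_eq (norm_expChar lam x)
  · exact integrable_const 1
  · exact Filter.Eventually.of_forall fun x => (continuous_expChar' x).continuousAt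

lemma funcEq {p : ℕ} (ρ₁ ρ₂ : ℝ) (hρ1 : ρ₁ ≠ 0) (hρ2 : ρ₂ ≠ 0)
    (Mt : Matrix (Fin 2) (Fin 2) ℝ) (hMt : Mt = !![ρ₁⁻¹, 0; 0, ρ₂⁻¹])
    (Dt : Fin p → (Fin 2 → ℝ)) (μt : Measure (Fin 2 → ℝ))
    [IsProbabilityMeasure μt]
    (hrep : μt = (p : ℝ≥0∞)⁻¹ • ∑ i : Fin p, μt.map (fun x => Mt⁻¹.mulVec (x + Dt i)))
    (η : Fin 2 → ℝ) :
    ftMeasure μt η = mask Dt ![ρ₁ * η 0, ρ₂ * η 1] * ftMeasure μt ![ρ₁ * η 0, ρ₂ * η 1] := by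
  have hinv : Mt⁻¹ = !![ρ₁, 0; 0, ρ₂] := by
    rw [hMt]
    apply Matrix.inv_eq_right_inv
    rw [Matrix.mul_fin_two, Matrix.one_fin_two]
    norm_num [inv_mul_cancel₀ hρ1, inv_mul_cancel₀ hρ2]
  have hφ : ∀ (d : Fin 2 → ℝ) (x : Fin 2 → ℝ),
      Mt⁻¹.mulVec (x + d) = ![ρ₁ * (x 0 + d 0), ρ₂ * (x 1 + d 1)] := by
    intro d x
    rw [hinv]
    funext i
    fin_cases i <;>
      simp [Matrix.mulVec, dotProduct, Fin.sum_univ_two]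
  have hcont : ∀ i : Fin p, Continuous fun x : Fin 2 → ℝ => Mt⁻¹.mulVec (x + Dt i) := by
    intro i
    have h : (fun x : Fin 2 → ℝ => Mt⁻¹.mulVec (x + Dt i))
        = (fun x => ![ρ₁ * (x 0 + Dt i 0), ρ₂ * (x 1 + Dt i 1)]) := funext fun x => hφ _ x
    rw [h]
    refine continuous_pi fun j => ?_
    fin_cases j <;> simp only [Matrix.cons_val_zero, Matrix.cons_val_one, Matrix.head_cons] <;>
      exact continuous_const.mul ((continuous_apply _).add continuous_const)
  haveI hprob : ∀ i : Fin p, IsProbabilityMeasure (μt.map (fun x => Mt⁻¹.mulVec (x + Dt i))) :=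
    fun i => Measure.isProbabilityMeasure_map (hcont i).measurable.aemeasurable
  set S : Fin 2 → ℝ := ![ρ₁ * η 0, ρ₂ * η 1] with hS
  have key : ∀ i : Fin p, ∫ y, expChar η y ∂(μt.map (fun x => Mt⁻¹.mulVec (x + Dt i)))
      = expChar S (Dt i) * ftMeasure μt S := by
    intro i
    rw [MeasureTheory.integral_map (hcont i).measurable.aemeasurable
      (continuous_expChar η).aestronglyMeasurable]
    have hpt : ∀ x, expChar η (Mt⁻¹.mulVec (x + Dt i)) = expChar S (Dt i) * expChar S x := by
      intro x
      rw [hφ]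
      unfold expChar
      rw [← Complex.exp_add]
      congr 1
      simp only [hS, Matrix.cons_val_zero, Matrix.cons_val_one, Matrix.head_cons]
      push_cast
      ring
    simp_rw [hpt]
    rw [MeasureTheory.integral_const_mul]
    rfl
  have h1 : ftMeasure μt η = ∫ x, expChar η x
      ∂((p : ℝ≥0∞)⁻¹ • ∑ i : Fin p, μt.map (fun x => Mt⁻¹.mulVec (x + Dt i))) := by
    rw [ftMeasure, ← hrep]
  rw [h1, MeasureTheory.integral_smul_measure, MeasureTheory.integral_finset_sum_measure
    (fun i _ => integrable_expChar _ _)]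
  simp_rw [key]
  rw [← Finset.sum_mul, mask, ENNReal.toReal_inv]
  rw [show ((p : ℝ≥0∞)).toReal = (p : ℝ) from rfl, Complex.real_smul]
  push_cast
  ring

lemma keyNeZero {p : ℕ} (ρ₁ ρ₂ : ℝ) (hρ10 : 0 < ρ₁) (hρ11 : ρ₁ < 1)
    (hρ20 : 0 < ρ₂) (hρ21 : ρ₂ < 1)
    (Mt : Matrix (Fin 2) (Fin 2) ℝ) (hMt : Mt = !![ρ₁⁻¹, 0; 0, ρ₂⁻¹])
    (Dt : Fin p → (Fin 2 → ℝ)) (μt : Measure (Fin 2 → ℝ))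
    [IsProbabilityMeasure μt]
    (hrep : μt = (p : ℝ≥0∞)⁻¹ • ∑ i : Fin p, μt.map (fun x => Mt⁻¹.mulVec (x + Dt i)))
    (ζ : Fin 2 → ℝ)
    (hmask : ∀ n : ℕ, 1 ≤ n → mask Dt ![ρ₁ ^ n * ζ 0, ρ₂ ^ n * ζ 1] ≠ 0) :
    ftMeasure μt ζ ≠ 0 := by
  have hiter : ∀ N : ℕ, ftMeasure μt ζ =
      (∏ n ∈ Finset.Icc 1 N, mask Dt ![ρ₁ ^ n * ζ 0, ρ₂ ^ n * ζ 1]) *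
        ftMeasure μt ![ρ₁ ^ N * ζ 0, ρ₂ ^ N * ζ 1] := by
    intro N
    induction N with
    | zero =>
        have hz : (![ρ₁ ^ 0 * ζ 0, ρ₂ ^ 0 * ζ 1] : Fin 2 → ℝ) = ζ := by
          funext i; fin_cases i <;> simp
        rw [hz]
        simp
    | succ N ih =>
        rw [ih, funcEq ρ₁ ρ₂ hρ10.ne' hρ20.ne' Mt hMt Dt μt hrep]
        have hpt : (![ρ₁ * (![ρ₁ ^ N * ζ 0, ρ₂ ^ N * ζ 1] 0),
            ρ₂ * (![ρ₁ ^ N * ζ 0, ρ₂ ^ N * ζ 1] 1)] : Fin 2 → ℝ)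
            = ![ρ₁ ^ (N + 1) * ζ 0, ρ₂ ^ (N + 1) * ζ 1] := by
          funext i; fin_cases i <;> simp <;> ring
        rw [hpt, Finset.prod_Icc_succ_top (Nat.succ_le_succ (Nat.zero_le N))]
        ring
  have hten : Filter.Tendsto (fun N : ℕ => (![ρ₁ ^ N * ζ 0, ρ₂ ^ N * ζ 1] : Fin 2 → ℝ))
      Filter.atTop (nhds 0) := by
    rw [tendsto_pi_nhds]
    intro i
    fin_cases i <;>
      simp only [Matrix.cons_val_zero, Matrix.cons_val_one, Matrix.head_cons, Pi.zero_apply]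
    · simpa using (tendsto_pow_atTop_nhds_zero_of_lt_one hρ10.le hρ11).mul_const (ζ 0)
    · simpa using (tendsto_pow_atTop_nhds_zero_of_lt_one hρ20.le hρ21).mul_const (ζ 1)
  have h1 : Filter.Tendsto (fun N : ℕ => ftMeasure μt ![ρ₁ ^ N * ζ 0, ρ₂ ^ N * ζ 1])
      Filter.atTop (nhds 1) := by
    have h2 := (continuousAt_ftMeasure μt).tendsto.comp hten
    rwa [ftMeasure_zero] at h2
  obtain ⟨N, hN⟩ := (h1.eventually_ne one_ne_zero).exists
  rw [hiter N]
  exact mul_ne_zero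
    (Finset.prod_ne_zero_iff.2 fun n hn => hmask n (Finset.mem_Icc.1 hn).1) hN

lemma arithUnique (p : ℕ) (hp : p.Prime) (a₀ : ℤ) (ha₀1 : 1 ≤ a₀) (ha₀2 : a₀ ≤ (p : ℤ) - 1)
    (t₁ : ℤ) (ht₁ : (t₁ : ℝ) ≠ 0) (hpt₁ : (p : ℤ) ∣ t₁) (x : ℝ)
    {n n' j j' : ℕ} {m m' : ℤ} (hn : 1 ≤ n) (hn' : 1 ≤ n')
    (hj1 : 1 ≤ j) (hj2 : j ≤ p - 1) (hj1' : 1 ≤ j') (hj2' : j' ≤ p - 1)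
    (h : ((t₁ : ℝ)⁻¹) ^ n * x = (j : ℝ) * (a₀ : ℝ) / p + (m : ℝ))
    (h' : ((t₁ : ℝ)⁻¹) ^ n' * x = (j' : ℝ) * (a₀ : ℝ) / p + (m' : ℝ)) :
    n = n' ∧ j = j' := by
  have hpZ : Prime (p : ℤ) := Nat.prime_iff_prime_int.1 hp
  have hpR : (p : ℝ) ≠ 0 := by exact_mod_cast hp.pos.ne'
  have ht₁Z : t₁ ≠ 0 := by exact_mod_cast ht₁
  have key : ∀ (N J : ℕ) (M : ℤ), 1 ≤ J → J ≤ p - 1 →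
      ((t₁ : ℝ)⁻¹) ^ N * x = (J : ℝ) * (a₀ : ℝ) / p + (M : ℝ) →
      (p : ℝ) * x = ((t₁ ^ N * ((J : ℤ) * a₀ + p * M) : ℤ) : ℝ) := by
    intro N J M _ _ hh
    have h2 : (t₁ : ℝ) ^ N * (((t₁ : ℝ)⁻¹) ^ N * x)
        = (t₁ : ℝ) ^ N * ((J : ℝ) * (a₀ : ℝ) / p + (M : ℝ)) := by rw [hh]
    rw [← mul_assoc, ← mul_pow, mul_inv_cancel₀ ht₁, one_pow, one_mul] at h2
    push_cast
    rw [h2]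
    field_simp
  have e := key n j m hj1 hj2 h
  have e' := key n' j' m' hj1' hj2' h'
  have eZ : t₁ ^ n * ((j : ℤ) * a₀ + p * m) = t₁ ^ n' * ((j' : ℤ) * a₀ + p * m') := by
    have h3 : ((t₁ ^ n * ((j : ℤ) * a₀ + p * m) : ℤ) : ℝ)
        = ((t₁ ^ n' * ((j' : ℤ) * a₀ + p * m') : ℤ) : ℝ) := by rw [← e, ← e']
    exact_mod_cast h3
  have hnd : ∀ (J : ℕ) (M : ℤ), 1 ≤ J → J ≤ p - 1 → ¬ ((p : ℤ) ∣ ((J : ℤ) * a₀ + p * M)) := by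
    intro J M hJ1 hJ2 hdvd
    have hd2 : (p : ℤ) ∣ (J : ℤ) * a₀ :=
      (dvd_add_right (Dvd.intro M rfl)).mp (by rwa [add_comm] at hdvd)
    rcases hpZ.dvd_mul.mp hd2 with h1 | h1
    · have hJp : (p : ℤ) ≤ (J : ℤ) := Int.le_of_dvd (by exact_mod_cast hJ1) h1
      have hp2 := hp.two_le
      omega
    · have : (p : ℤ) ≤ a₀ := Int.le_of_dvd (by omega) h1
      omega
  have hne : n = n' := by
    by_contra hne
    rcases Nat.lt_or_ge n n' with hlt | hge
    · have hq : (j : ℤ) * a₀ + p * m = t₁ ^ (n' - n) * ((j' : ℤ) * a₀ + p * m') := by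
        have h3 : t₁ ^ n * ((j : ℤ) * a₀ + p * m)
            = t₁ ^ n * (t₁ ^ (n' - n) * ((j' : ℤ) * a₀ + p * m')) := by
          rw [eZ, ← mul_assoc, ← pow_add]
          congr 2
          omega
        exact mul_left_cancel₀ (pow_ne_zero _ ht₁Z) h3
      exact hnd j m hj1 hj2 (hq ▸ Dvd.dvd.mul_right
        (hpt₁.trans (dvd_pow_self t₁ (by omega : n' - n ≠ 0))) _)
    · have hlt : n' < n := by omega
      have hq : (j' : ℤ) * a₀ + p * m' = t₁ ^ (n - n') * ((j : ℤ) * a₀ + p * m) := by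
        have h3 : t₁ ^ n' * ((j' : ℤ) * a₀ + p * m')
            = t₁ ^ n' * (t₁ ^ (n - n') * ((j : ℤ) * a₀ + p * m)) := by
          rw [← eZ, ← mul_assoc, ← pow_add]
          congr 2
          omega
        exact mul_left_cancel₀ (pow_ne_zero _ ht₁Z) h3
      exact hnd j' m' hj1' hj2' (hq ▸ Dvd.dvd.mul_right
        (hpt₁.trans (dvd_pow_self t₁ (by omega : n - n' ≠ 0))) _)
  subst hne
  refine ⟨rfl, ?_⟩
  have hA : (j : ℤ) * a₀ + p * m = (j' : ℤ) * a₀ + p * m' :=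
    mul_left_cancel₀ (pow_ne_zero _ ht₁Z) eZ
  have hdvd : (p : ℤ) ∣ ((j : ℤ) - (j' : ℤ)) * a₀ := ⟨m' - m, by linarith [hA]⟩
  rcases hpZ.dvd_mul.mp hdvd with h1 | h1
  · have hj0 : ((j : ℤ) - (j' : ℤ)) = 0 := by
      apply Int.eq_zero_of_abs_lt_dvd h1
      have hp2 := hp.two_le
      rw [abs_lt]
      omega
    omega
  · exfalso
    have : (p : ℤ) ≤ a₀ := Int.le_of_dvd (by omega) h1
    omega

lemma maskDt_iff {p : ℕ} (hp : p.Prime) (D : Fin p → Fin 2 → ℤ) (a : Fin 2 → ℤ)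
    (hZ : ZeroSetCond p D a) (c'' : ℝ) (Dt : Fin p → Fin 2 → ℝ)
    (hDt : ∀ i, Dt i = ![(D i 0 : ℝ) + c'' * (D i 1 : ℝ), (D i 1 : ℝ)])
    (η : Fin 2 → ℝ) :
    mask Dt η = 0 ↔ ∃ j : ℕ, 1 ≤ j ∧ j ≤ p - 1 ∧ ∃ m : Fin 2 → ℤ,
      η 0 = (j : ℝ) * (a 0 : ℝ) / p + (m 0 : ℝ) ∧
      c'' * η 0 + η 1 = (j : ℝ) * (a 1 : ℝ) / p + (m 1 : ℝ) := by
  have hmm : mask Dt η = mask (digitR D) ![η 0, c'' * η 0 + η 1] := by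
    unfold mask
    congr 1
    apply Finset.sum_congr rfl
    intro i _
    unfold expChar digitR
    rw [hDt i]
    simp only [Matrix.cons_val_zero, Matrix.cons_val_one, Matrix.head_cons]
    congr 2
    push_cast
    ring
  rw [hmm, hZ.2]
  constructor
  · rintro ⟨j, hj1, hj2, k, hk⟩
    exact ⟨j, hj1, hj2, k, by simpa using hk 0, by simpa using hk 1⟩
  · rintro ⟨j, hj1, hj2, k, hk0, hk1⟩
    refine ⟨j, hj1, hj2, k, ?_⟩
    intro i
    fin_cases i
    · simpa using hk0
    · simpa using hk1

/-- Lemma 5.6: with `ρ₁⁻¹ = t₁, ρ₂⁻¹ = t₂ ∈ pℤ`, `c'' = c₁/c₂`, `gcd(c₁,c₂)=1`,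
`c₂ = p^u·c₂'` with `p ∤ c₂'`: the integral periodic zero set of `μ_{M̃,D̃}` is empty,
i.e. for every `ξ ∈ G` there is `k ∈ ℤ²` with `μ̂_{M̃,D̃}(ξ + P'k) ≠ 0`. -/
theorem stmt19 (p : ℕ) (hp : p.Prime) (ρ₁ ρ₂ c : ℝ)
    (hρ10 : 0 < ρ₁) (hρ11 : ρ₁ < 1) (hρ20 : 0 < ρ₂) (hρ21 : ρ₂ < 1) (hρ : ρ₁ ≠ ρ₂)
    (D : Fin p → (Fin 2 → ℤ)) (hD : Function.Injective D)
    (a : Fin 2 → ℤ) (hZ : ZeroSetCond p D a)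
    (hD0 : D ⟨0, hp.pos⟩ = 0)
    (hD11 : D ⟨1, hp.one_lt⟩ 1 = 0) (hD10 : D ⟨1, hp.one_lt⟩ 0 ≠ 0)
    (t₁ t₂ : ℤ) (ht₁ : ρ₁⁻¹ = (t₁ : ℝ)) (ht₂ : ρ₂⁻¹ = (t₂ : ℝ))
    (hpt₁ : (p : ℤ) ∣ t₁) (hpt₂ : (p : ℤ) ∣ t₂)
    (c₁ c₂ c₂' : ℤ) (hc₁c₂ : Int.gcd c₁ c₂ = 1) (u : ℕ)
    (hc₂ : c₂ = (p : ℤ) ^ u * c₂') (hc₂' : ¬ (p : ℤ) ∣ c₂')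
    (hc'' : c / (ρ₁⁻¹ - ρ₂⁻¹) = (c₁ : ℝ) / (c₂ : ℝ))
    (Mt : Matrix (Fin 2) (Fin 2) ℝ) (hMt : Mt = !![ρ₁⁻¹, 0; 0, ρ₂⁻¹])
    (Dt : Fin p → (Fin 2 → ℝ))
    (hDt : ∀ i, Dt i = ![(D i 0 : ℝ) + (c / (ρ₁⁻¹ - ρ₂⁻¹)) * (D i 1 : ℝ), (D i 1 : ℝ)])
    (μt : Measure (Fin 2 → ℝ)) (hμt : IsSelfAffine μt Mt Dt)
    (P' : Matrix (Fin 2) (Fin 2) ℝ)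
    (hP' : P' = !![(c₂' : ℝ), 0; -(c₁ : ℝ) / (p : ℝ) ^ u, -1]) :
    ∀ ξ : Fin 2 → ℝ,
      ξ 0 ∈ Set.Icc (0 : ℝ) ((a 0 : ℝ) * (c₂' : ℝ)) →
      ξ 1 ∈ Set.Icc (-(|(c₁ : ℝ) * (a 0 : ℝ) - (c₂ : ℝ) * (a 1 : ℝ)| / (p : ℝ) ^ (u + 1)))
        (|(c₁ : ℝ) * (a 0 : ℝ) - (c₂ : ℝ) * (a 1 : ℝ)| / (p : ℝ) ^ (u + 1)) →
      ∃ k : Fin 2 → ℤ, ftMeasure μt (ξ + P'.mulVec fun j => (k j : ℝ)) ≠ 0 := by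
  intro ξ hξ0 hξ1
  haveI : IsProbabilityMeasure μt := hμt.1
  have hrep := hμt.2.2
  have hρ1ne : ρ₁ ≠ 0 := hρ10.ne'
  have hρ2ne : ρ₂ ≠ 0 := hρ20.ne'
  have ht₁ne : (t₁ : ℝ) ≠ 0 := by rw [← ht₁]; exact inv_ne_zero hρ1ne
  have hρ₁t : ρ₁ = ((t₁ : ℝ))⁻¹ := by rw [← ht₁, inv_inv]
  have hmask_iff := maskDt_iff hp D a hZ (c / (ρ₁⁻¹ - ρ₂⁻¹)) Dt hDt
  have hptEq : ∀ k₁ : ℤ,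
      (ξ + P'.mulVec fun j => ((![0, k₁] : Fin 2 → ℤ) j : ℝ)) = ![ξ 0, ξ 1 - (k₁ : ℝ)] := by
    intro k₁
    funext i
    fin_cases i <;>
      simp [hP', Matrix.mulVec, dotProduct, Fin.sum_univ_two] <;> ring
  suffices hsuff : ∃ k₁ : ℤ, ∀ n : ℕ, 1 ≤ n →
      mask Dt ![ρ₁ ^ n * ξ 0, ρ₂ ^ n * (ξ 1 - (k₁ : ℝ))] ≠ 0 by
    obtain ⟨k₁, hk₁⟩ := hsuff
    refine ⟨![0, k₁], ?_⟩
    rw [hptEq k₁]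
    apply keyNeZero ρ₁ ρ₂ hρ10 hρ11 hρ20 hρ21 Mt hMt Dt μt hrep
    intro n hn
    have h0 : (![ξ 0, ξ 1 - (k₁ : ℝ)] : Fin 2 → ℝ) 0 = ξ 0 := rfl
    have h1 : (![ξ 0, ξ 1 - (k₁ : ℝ)] : Fin 2 → ℝ) 1 = ξ 1 - (k₁ : ℝ) := rfl
    rw [h0, h1]
    exact hk₁ n hn
  by_cases H : ∃ n j : ℕ, ∃ m : ℤ, 1 ≤ n ∧ 1 ≤ j ∧ j ≤ p - 1 ∧
      ρ₁ ^ n * ξ 0 = (j : ℝ) * (a 0 : ℝ) / p + (m : ℝ)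
  · obtain ⟨n₀, j₀, m₀, hn₀, hj₀1, hj₀2, hfc₀⟩ := H
    have hfc₀' : ((t₁ : ℝ)⁻¹) ^ n₀ * ξ 0 = (j₀ : ℝ) * (a 0 : ℝ) / p + (m₀ : ℝ) := by
      rwa [hρ₁t] at hfc₀
    by_cases H2 : mask Dt ![ρ₁ ^ n₀ * ξ 0, ρ₂ ^ n₀ * (ξ 1 - (((0 : ℤ)) : ℝ))] = 0
    · -- take k₁ = 1
      refine ⟨1, fun n hn hmz => ?_⟩
      rw [hmask_iff] at hmz H2
      obtain ⟨j, hj1, hj2, m, hm0, hm1⟩ := hmz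
      obtain ⟨j', hj1', hj2', m', hm0', hm1'⟩ := H2
      simp only [Matrix.cons_val_zero, Matrix.cons_val_one, Matrix.head_cons] at hm0 hm1 hm0' hm1'
      have hfc : ((t₁ : ℝ)⁻¹) ^ n * ξ 0 = (j : ℝ) * (a 0 : ℝ) / p + ((m 0 : ℤ) : ℝ) := by
        rwa [hρ₁t] at hm0
      have hfc' : ((t₁ : ℝ)⁻¹) ^ n₀ * ξ 0 = (j' : ℝ) * (a 0 : ℝ) / p + ((m' 0 : ℤ) : ℝ) := by
        rwa [hρ₁t] at hm0'
      obtain ⟨hnn, _⟩ := arithUnique p hp (a 0) (hZ.1 0).1 (hZ.1 0).2 t₁ ht₁ne hpt₁ (ξ 0)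
        hn hn₀ hj1 hj2 hj₀1 hj₀2 hfc hfc₀'
      subst hnn
      obtain ⟨_, hjj⟩ := arithUnique p hp (a 0) (hZ.1 0).1 (hZ.1 0).2 t₁ ht₁ne hpt₁ (ξ 0)
        hn hn hj1' hj2' hj1 hj2 hfc' hfc
      subst hjj
      push_cast at hm1 hm1'
      have hsub : ρ₂ ^ n = ((m' 1 : ℤ) : ℝ) - ((m 1 : ℤ) : ℝ) := by
        linear_combination hm1' - hm1
      have hlt1 : ρ₂ ^ n < 1 := pow_lt_one₀ hρ20.le hρ21 (by omega)
      have hgt0 : 0 < ρ₂ ^ n := pow_pos hρ20 n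
      rw [hsub] at hlt1 hgt0
      have h1' : (0 : ℤ) < m' 1 - m 1 := by exact_mod_cast (by push_cast; linarith : (0:ℝ) < ((m' 1 - m 1 : ℤ) : ℝ))
      have h2' : m' 1 - m 1 < 1 := by exact_mod_cast (by push_cast; linarith : (((m' 1 - m 1 : ℤ)) : ℝ) < 1)
      omega
    · -- take k₁ = 0
      refine ⟨0, fun n hn hmz => ?_⟩
      have hmz' := hmz
      rw [hmask_iff] at hmz'
      obtain ⟨j, hj1, hj2, m, hm0, hm1⟩ := hmz'
      simp only [Matrix.cons_val_zero, Matrix.cons_val_one, Matrix.head_cons] at hm0 hm1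
      have hfc : ((t₁ : ℝ)⁻¹) ^ n * ξ 0 = (j : ℝ) * (a 0 : ℝ) / p + ((m 0 : ℤ) : ℝ) := by
        rwa [hρ₁t] at hm0
      obtain ⟨hnn, _⟩ := arithUnique p hp (a 0) (hZ.1 0).1 (hZ.1 0).2 t₁ ht₁ne hpt₁ (ξ 0)
        hn hn₀ hj1 hj2 hj₀1 hj₀2 hfc hfc₀'
      subst hnn
      exact H2 hmz
  · refine ⟨0, fun n hn hmz => ?_⟩
    rw [hmask_iff] at hmz
    obtain ⟨j, hj1, hj2, m, hm0, hm1⟩ := hmz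
    simp only [Matrix.cons_val_zero, Matrix.cons_val_one, Matrix.head_cons] at hm0
    exact H ⟨n, j, m 0, hn, hj1, hj2, hm0⟩

end
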